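/- Equip ℕ with the topology in which a set is open if and only if it is downward closed. Let E = {n ∈ ℕ : n is even}, O = {n ∈ ℕ : n is odd}, and define recursively E₀ = E and E_j = E_{j−1} ∩ closure(closure(E_{j−1}) ∩ O) for j ≥ 1. Then E_j = {n ∈ ℕ : n is even and 2j ≤ n} = E ∩ [2j, ∞) for every j ∈ ℕ. -/

import Mathlib

/-- The topology on `ℕ` in which a set is open if and only if it is downward closed
(the lower Alexandrov topology of the usual order). -/
def lowerTopology : TopologicalSpace ℕ where
  IsOpen U := ∀ ⦃m n : ℕ⦄, n ∈ U → m ≤ n → m ∈ U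
  isOpen_univ := fun _ _ _ _ => trivial
  isOpen_inter := fun _ _ hs ht _ _ hn hmn => ⟨hs hn.1 hmn, ht hn.2 hmn⟩
  isOpen_sUnion := fun _ hS _ _ hn hmn => by
    obtain ⟨s, hsS, hns⟩ := hn
    exact ⟨s, hsS, hS s hsS hns hmn⟩

/-- The recursively defined sets `E₀ = E` (the evens) and
`E_j = E_{j−1} ∩ k(k E_{j−1} ∩ O)` for `j ≥ 1`, where `O` is the odds and `k` is the
closure in the lower topology on `ℕ`. -/
def kuratowskiE : ℕ → Set ℕ
  | 0 => {n : ℕ | Even n}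
  | j + 1 => kuratowskiE j ∩
      @closure ℕ lowerTopology (@closure ℕ lowerTopology (kuratowskiE j) ∩ {n : ℕ | Odd n})

/-! The closed sets of `lowerTopology` are the upward closed ones, so the closure of a set is
its upward closure, which for a set with least element `a` is `[a, ∞)`. Hence
`k E_j ∩ O = [2j, ∞) ∩ O` has least element `2j + 1`, and intersecting `E_j` with its closure
`[2j + 1, ∞)` removes exactly the even number `2j`. -/

lemma lowerTopology_eq_lowerSet : lowerTopology = Topology.lowerSet ℕ := by
  ext U
  exact ⟨fun hU _ _ hmn hn => hU hn hmn, fun hU _ _ hn hmn => hU hmn hn⟩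

lemma IsLeast.coe_upperClosure {α : Type*} [Preorder α] {s : Set α} {a : α} (h : IsLeast s a) :
    (upperClosure s : Set α) = Set.Ici a := by
  ext x
  simp only [SetLike.mem_coe, mem_upperClosure, Set.mem_Ici]
  exact ⟨fun ⟨_, hb, hbx⟩ => (h.2 hb).trans hbx, fun hax => ⟨a, h.1, hax⟩⟩

lemma lowerTopology_closure_of_isLeast {s : Set ℕ} {a : ℕ} (h : IsLeast s a) :
    @closure ℕ lowerTopology s = Set.Ici a := by
  let := lowerTopology
  have : Topology.IsLowerSet ℕ := ⟨lowerTopology_eq_lowerSet⟩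
  rw [Topology.IsLowerSet.closure_eq_upperClosure, h.coe_upperClosure]

lemma isLeast_even_ge (j : ℕ) : IsLeast {n : ℕ | Even n ∧ 2 * j ≤ n} (2 * j) :=
  ⟨⟨even_two_mul j, le_rfl⟩, fun _ hn => hn.2⟩

lemma isLeast_Ici_inter_odd (j : ℕ) : IsLeast (Set.Ici (2 * j) ∩ {n : ℕ | Odd n}) (2 * j + 1) :=
  ⟨⟨Nat.le_succ _, odd_two_mul_add_one j⟩, fun n ⟨hjn, hn⟩ => by
    rw [Set.mem_Ici] at hjn
    rw [Set.mem_ofPred_eq, Nat.odd_iff] at hn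
    omega⟩

/-- With `E₀ = E` the evens, `O` the odds, and `E_j = E_{j−1} ∩ k(k E_{j−1} ∩ O)`, one has
`E_j = {n : Even n ∧ 2j ≤ n} = E ∩ [2j, ∞)` for every `j`. -/
theorem kuratowskiE_eq (j : ℕ) :
    kuratowskiE j = {n : ℕ | Even n ∧ 2 * j ≤ n} := by
  induction j with
  | zero => simp [kuratowskiE]
  | succ j ih =>
    rw [kuratowskiE, ih, lowerTopology_closure_of_isLeast (isLeast_even_ge j),
      lowerTopology_closure_of_isLeast (isLeast_Ici_inter_odd j)]
    ext n
    simp only [Set.mem_inter_iff, Set.mem_ofPred_eq, Set.mem_Ici, Nat.even_iff]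
    omega
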